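/- arXiv:2409.09472 — 2 statements merged into one kernel-verified Lean document; each statement's English description precedes it below -/
import Mathlib

section
/- Let p be prime and d ≥ r ≥ 1. Define s_{p^m} = ∑_{j=0}^{m} J₂(p^j)·σ̄^{p^j} as an arithmetic function. If the family of arithmetic functions s_{p^d}[p^r] satisfies the triangular system p^{2r}·s_{p^{d−r}} = ∑_{j=0}^{r} J₂(p^j)·s_{p^d}[p^j] for all 0 ≤ r ≤ d with s_{p^d}[1] = s_{p^d}, then s_{p^d}[p^r] = s_{p^{d−r}} − p^{2d−2r}·σ̄^{p^{d−r+1}} for 1 ≤ r ≤ d. -/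
/-!
Subtracting the equation of the system for `r - 1` from the one for `r` isolates
`J₂(p^r)·s_{p^d}[p^r] = p^{2r}·s_{p^{d-r}} - p^{2r-2}·s_{p^{d-r+1}}`. Since
`s_{p^{d-r+1}} = s_{p^{d-r}} + J₂(p^{d-r+1})·σ̄^{p^{d-r+1}}` and
`p^{2r-2}·J₂(p^{d-r+1}) = p^{2d-2r}·J₂(p^r)`, the right side is `J₂(p^r)` times the claimed value,
and `J₂(p^r) ≠ 0`.
-/

open Finset

/-- The second Jordan totient `J₂ = μ * Id²`, as a rational-valued arithmetic function. -/
def J2 (n : ℕ) : ℚ := ∑ d ∈ n.divisors, (ArithmeticFunction.moebius d : ℚ) * ((n / d : ℕ) : ℚ) ^ 2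

/-- `σ̄^m(a) = σ(a/m)` if `m ∣ a`, and `0` otherwise. -/
def sigmaBar (m a : ℕ) : ℚ := if m ∣ a then ∑ e ∈ (a / m).divisors, (e : ℚ) else 0

/-- `s_{p^m} = ∑_{j=0}^{m} J₂(p^j)·σ̄^{p^j}` as an arithmetic function. -/
def sPow (p m : ℕ) (a : ℕ) : ℚ := ∑ j ∈ Finset.range (m + 1), J2 (p ^ j) * sigmaBar (p ^ j) a

lemma J2_prime_pow_succ {p : ℕ} (hp : p.Prime) (j : ℕ) :
    J2 (p ^ (j + 1)) = (p : ℚ) ^ (2 * j) * ((p : ℚ) ^ 2 - 1) := by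
  have hsq : ∀ i, (ArithmeticFunction.moebius (p ^ (i + 2)) : ℚ) = 0 := fun i => by
    rw [ArithmeticFunction.moebius_apply_prime_pow hp (by omega), if_neg (by omega)]
    simp
  have hdiv : p ^ (j + 1) / p = p ^ j := by
    rw [pow_succ, Nat.mul_div_cancel _ hp.pos]
  rw [J2, Nat.sum_divisors_prime_pow hp, sum_range_succ', sum_range_succ',
    sum_eq_zero fun i _ => by rw [hsq, zero_mul]]
  simp only [zero_add, pow_zero, pow_one, Nat.div_one, ArithmeticFunction.moebius_apply_one,
    ArithmeticFunction.moebius_apply_prime hp, hdiv]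
  push_cast [← pow_mul]
  ring

lemma J2_prime_pow_succ_ne_zero {p : ℕ} (hp : p.Prime) (j : ℕ) : J2 (p ^ (j + 1)) ≠ 0 := by
  have hp1 : (1 : ℚ) < p := by exact_mod_cast hp.one_lt
  rw [J2_prime_pow_succ hp]
  exact mul_ne_zero (pow_ne_zero _ (by positivity)) (by nlinarith)

lemma sPow_succ (p m a : ℕ) :
    sPow p (m + 1) a = sPow p m a + J2 (p ^ (m + 1)) * sigmaBar (p ^ (m + 1)) a :=
  sum_range_succ _ _

theorem triangular_system_solution_general (p d : ℕ) (hp : p.Prime)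
    (t : ℕ → ℕ → ℚ)
    (hsys : ∀ r, r ≤ d → ∀ a, 0 < a →
      (p : ℚ) ^ (2 * r) * sPow p (d - r) a
        = ∑ j ∈ Finset.range (r + 1), J2 (p ^ j) * t j a) :
    ∀ r, 1 ≤ r → r ≤ d → ∀ a, 0 < a →
      t r a = sPow p (d - r) a - (p : ℚ) ^ (2 * d - 2 * r) * sigmaBar (p ^ (d - r + 1)) a := by
  intro r hr1 hrd a ha
  obtain ⟨s, rfl⟩ : ∃ s, r = s + 1 := ⟨r - 1, by omega⟩
  obtain ⟨k, rfl⟩ : ∃ k, d = k + (s + 1) := ⟨d - (s + 1), by omega⟩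
  have hstep : J2 (p ^ (s + 1)) * t (s + 1) a
      = (p : ℚ) ^ (2 * (s + 1)) * sPow p k a - (p : ℚ) ^ (2 * s) * sPow p (k + 1) a := by
    have hcur := hsys (s + 1) hrd a ha
    have hprev := hsys s (by omega) a ha
    rw [show k + (s + 1) - (s + 1) = k by omega, sum_range_succ] at hcur
    rw [show k + (s + 1) - s = k + 1 by omega] at hprev
    linarith
  rw [show k + (s + 1) - (s + 1) = k by omega, show 2 * (k + (s + 1)) - 2 * (s + 1) = 2 * k by omega]
  apply mul_left_cancel₀ (J2_prime_pow_succ_ne_zero hp s)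
  rw [hstep, sPow_succ, J2_prime_pow_succ hp s, J2_prime_pow_succ hp k]
  ring

/-- If the family `t r = s_{p^d}[p^r]` solves the triangular system
`p^{2r}·s_{p^{d−r}} = ∑_{j=0}^{r} J₂(p^j)·s_{p^d}[p^j]` for `0 ≤ r ≤ d` with
`s_{p^d}[1] = s_{p^d}`, then `s_{p^d}[p^r] = s_{p^{d−r}} − p^{2d−2r}·σ̄^{p^{d−r+1}}`
for `1 ≤ r ≤ d`. -/
theorem triangular_system_solution (p d : ℕ) (hp : p.Prime) (hd : 1 ≤ d)
    (t : ℕ → ℕ → ℚ)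
    (ht0 : ∀ a, 0 < a → t 0 a = sPow p d a)
    (hsys : ∀ r, r ≤ d → ∀ a, 0 < a →
      (p : ℚ) ^ (2 * r) * sPow p (d - r) a
        = ∑ j ∈ Finset.range (r + 1), J2 (p ^ j) * t j a) :
    ∀ r, 1 ≤ r → r ≤ d → ∀ a, 0 < a →
      t r a = sPow p (d - r) a - (p : ℚ) ^ (2 * d - 2 * r) * sigmaBar (p ^ (d - r + 1)) a :=
  triangular_system_solution_general p d hp t hsys
end

section
/- Define for d | δ the element 𝛔_δ(a) = ∑_{d | δ} σ̄^{δ/d}(a)·𝛝_δ(d) in ℚ[Tor_δ(E)], where 𝛝_δ(d) = ∏_p (ϑ_{p^{ν_p(d)}} − [ν_p(d) < ν_p(δ)]·ϑ_{p^{ν_p(d)+1}}). Then 𝛔_δ(a)·ϑ_{δ/gcd(a,δ)} = 𝛔_δ(a). -/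
/-!
Call `x ∈ ℚ[(ℤ/δ)²]` `n`-invariant if `x · (τ) = x` for every `n`-torsion point `τ`. Since
`ϑ_n` is the average of `(τ)` over the `n²` points of `n`-torsion, `x · ϑ_n = x` for every
`n`-invariant `x` with `n ∣ δ`. Each `ϑ_{p^k}` with `k ≥ ν_p(d)` is `p^{ν_p(d)}`-invariant, and
invariance under coprime torsion orders multiplies (Bézout), so `𝛝_δ(d)` is `d`-invariant.
Finally, a term of `𝛔_δ(a)` survives only if `δ/d ∣ a`, hence `δ/d ∣ gcd(a, δ)`, i.e.
`δ / gcd(a, δ) ∣ d`, so that term is `δ / gcd(a, δ)`-invariant.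
-/

open Finset

/-- `ϑ_m = (1/m²)·∑_{m·θ = 0} (θ)` in the group algebra `ℚ[(ℤ/δℤ)²]`. -/
noncomputable def theta (δ : ℕ) [NeZero δ] (m : ℕ) :
    AddMonoidAlgebra ℚ (ZMod δ × ZMod δ) :=
  ((m : ℚ) ^ 2)⁻¹ •
    ∑ θ ∈ Finset.univ.filter (fun θ : ZMod δ × ZMod δ => m • θ = 0),
      AddMonoidAlgebra.single θ 1

/-- `𝛝_δ(d) = ∏_p (ϑ_{p^{ν_p(d)}} − [ν_p(d) < ν_p(δ)]·ϑ_{p^{ν_p(d)+1}})`. -/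
noncomputable def bvartheta (δ : ℕ) [NeZero δ] (d : ℕ) :
    AddMonoidAlgebra ℚ (ZMod δ × ZMod δ) :=
  ∏ p ∈ δ.primeFactors,
    (theta δ (p ^ d.factorization p) -
      if d.factorization p < δ.factorization p
        then theta δ (p ^ (d.factorization p + 1)) else 0)

/-- `𝛔_δ(a) = ∑_{d ∣ δ} σ̄^{δ/d}(a)·𝛝_δ(d)` in `ℚ[(ℤ/δℤ)²]`. -/
noncomputable def bsigma (δ : ℕ) [NeZero δ] (a : ℕ) :
    AddMonoidAlgebra ℚ (ZMod δ × ZMod δ) :=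
  ∑ d ∈ δ.divisors, sigmaBar (δ / d) a • bvartheta δ d

open AddMonoidAlgebra Function

namespace AddMonoidAlgebra

variable {k G : Type*} [CommRing k] [AddCommGroup G]

def IsTorsionInvariant (m : ℕ) (x : AddMonoidAlgebra k G) : Prop :=
  ∀ τ : G, m • τ = 0 → x * single τ 1 = x

namespace IsTorsionInvariant

variable {m n : ℕ} {x y : AddMonoidAlgebra k G}

theorem of_dvd (hnm : n ∣ m) (hx : IsTorsionInvariant m x) : IsTorsionInvariant n x := by
  intro τ hτ
  obtain ⟨c, rfl⟩ := hnm
  exact hx τ (by rw [mul_comm, mul_smul, hτ, smul_zero])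

theorem zero : IsTorsionInvariant m (0 : AddMonoidAlgebra k G) :=
  fun _ _ => zero_mul _

theorem sub (hx : IsTorsionInvariant m x) (hy : IsTorsionInvariant m y) :
    IsTorsionInvariant m (x - y) :=
  fun τ hτ => by rw [sub_mul, hx τ hτ, hy τ hτ]

theorem smul (c : k) (hx : IsTorsionInvariant m x) : IsTorsionInvariant m (c • x) :=
  fun τ hτ => by rw [smul_mul_assoc, hx τ hτ]

theorem mul_of_coprime (hx : IsTorsionInvariant m x) (hy : IsTorsionInvariant n y)
    (hmn : m.Coprime n) : IsTorsionInvariant (m * n) (x * y) := by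
  intro τ hτ
  -- Bézout: `τ = (v n) • τ + (u m) • τ`, an `m`-torsion point plus an `n`-torsion point
  obtain ⟨u, v, huv⟩ := hmn.isCoprime
  have hτ' : ((m : ℤ) * n) • τ = 0 := by rw [← Nat.cast_mul, natCast_zsmul, hτ]
  have hm : m • ((v * n) • τ) = 0 := by
    rw [← natCast_zsmul, smul_smul, mul_left_comm, mul_smul, hτ', smul_zero]
  have hn : n • ((u * m) • τ) = 0 := by
    rw [← natCast_zsmul, smul_smul, mul_left_comm, mul_comm (n : ℤ), mul_smul, hτ', smul_zero]
  have hsplit : single τ (1 : k) = single ((v * n) • τ) 1 * single ((u * m) • τ) 1 := by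
    rw [single_mul_single, one_mul, ← add_smul, add_comm, huv, one_smul]
  calc x * y * single τ 1 = x * single ((v * n) • τ) 1 * (y * single ((u * m) • τ) 1) := by
        rw [hsplit]; ring
    _ = x * y := by rw [hx _ hm, hy _ hn]

theorem prod {ι : Type*} {s : Finset ι} {m : ι → ℕ} {x : ι → AddMonoidAlgebra k G}
    (hm : (s : Set ι).Pairwise (Nat.Coprime on m))
    (hx : ∀ i ∈ s, IsTorsionInvariant (m i) (x i)) :
    IsTorsionInvariant (∏ i ∈ s, m i) (∏ i ∈ s, x i) := by
  classical
  induction s using Finset.induction_on with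
  | empty => intro τ hτ; simp_all [one_def]
  | insert i s hi ih =>
    rw [prod_insert hi, prod_insert hi]
    refine (hx i (mem_insert_self i s)).mul_of_coprime
      (ih (hm.mono (by simp)) fun j hj => hx j (mem_insert_of_mem hj)) ?_
    exact Nat.Coprime.prod_right fun j hj =>
      hm (mem_insert_self i s) (mem_insert_of_mem hj) (ne_of_mem_of_not_mem hj hi).symm

end IsTorsionInvariant

variable (k) [Fintype G] [DecidableEq G]

noncomputable def torsionIndicator (m : ℕ) : AddMonoidAlgebra k G :=
  ∑ θ ∈ univ.filter (fun θ : G => m • θ = 0), single θ 1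

variable {k}

theorem isTorsionInvariant_torsionIndicator {m n : ℕ} (hnm : n ∣ m) :
    IsTorsionInvariant n (torsionIndicator k (G := G) m) := by
  intro τ hτ
  have hτm : m • τ = 0 := by obtain ⟨c, rfl⟩ := hnm; rw [mul_comm, mul_smul, hτ, smul_zero]
  simp only [torsionIndicator, sum_mul, sum_filter]
  exact Fintype.sum_equiv (Equiv.addRight τ) _ _ fun θ => by simp [smul_add, hτm]

theorem IsTorsionInvariant.mul_torsionIndicator {m : ℕ} {x : AddMonoidAlgebra k G}
    (hx : IsTorsionInvariant m x) :
    x * torsionIndicator k m = #{θ : G | m • θ = 0} • x := by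
  rw [torsionIndicator, mul_sum, sum_congr rfl fun θ hθ => hx θ (mem_filter.mp hθ).2, sum_const]

end AddMonoidAlgebra

theorem card_filter_nsmul_prod_eq_zero {G H : Type*} [AddCommGroup G] [AddCommGroup H]
    [Fintype G] [Fintype H] [DecidableEq G] [DecidableEq H] (n : ℕ) :
    #{θ : G × H | n • θ = 0} = #{x : G | n • x = 0} * #{y : H | n • y = 0} := by
  rw [← card_product, ← filter_product]
  simp [Prod.ext_iff]

theorem ZMod.card_filter_nsmul_eq_zero_of_dvd {δ n : ℕ} [NeZero δ] (hn : n ∣ δ) :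
    #{x : ZMod δ | n • x = 0} = n := by
  have hn0 : n ≠ 0 := ne_zero_of_dvd_ne_zero (NeZero.ne δ) hn
  refine le_antisymm (IsAddCyclic.card_nsmul_eq_zero_le (Nat.pos_of_ne_zero hn0)) ?_
  -- the multiples of `δ / n` are `n` distinct points killed by `n`
  set g : ZMod δ := ((δ / n : ℕ) : ZMod δ)
  have hg : addOrderOf g = n := by
    rw [ZMod.addOrderOf_coe _ (NeZero.ne δ), Nat.gcd_eq_right (Nat.div_dvd_of_dvd hn),
      Nat.div_div_self hn (NeZero.ne δ)]
  rw [← hg]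
  exact le_card_of_inj_on_range (· • g)
    (fun i _ => mem_filter.mpr
      ⟨mem_univ _, by rw [smul_comm, addOrderOf_nsmul_eq_zero, smul_zero]⟩)
    nsmul_injOn_Iio_addOrderOf

theorem theta_eq_smul_torsionIndicator (δ : ℕ) [NeZero δ] (m : ℕ) :
    theta δ m = ((m : ℚ) ^ 2)⁻¹ • torsionIndicator ℚ m := rfl

theorem AddMonoidAlgebra.IsTorsionInvariant.mul_theta {δ n : ℕ} [NeZero δ]
    {x : AddMonoidAlgebra ℚ (ZMod δ × ZMod δ)} (hx : IsTorsionInvariant n x) (hn : n ∣ δ) :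
    x * theta δ n = x := by
  have hn0 : (n : ℚ) ≠ 0 := Nat.cast_ne_zero.mpr (ne_zero_of_dvd_ne_zero (NeZero.ne δ) hn)
  rw [theta_eq_smul_torsionIndicator, mul_smul_comm, hx.mul_torsionIndicator, card_filter_nsmul_prod_eq_zero,
    ZMod.card_filter_nsmul_eq_zero_of_dvd hn, ← Nat.cast_smul_eq_nsmul ℚ, smul_smul]
  push_cast
  rw [← sq, inv_mul_cancel₀ (pow_ne_zero 2 hn0), one_smul]

theorem isTorsionInvariant_theta (δ : ℕ) [NeZero δ] {m n : ℕ} (hnm : n ∣ m) :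
    IsTorsionInvariant n (theta δ m) :=
  (isTorsionInvariant_torsionIndicator hnm).smul _

theorem isTorsionInvariant_bvartheta {δ d : ℕ} [NeZero δ] (hd : d ∣ δ) :
    IsTorsionInvariant d (bvartheta δ d) := by
  have hd0 : d ≠ 0 := ne_zero_of_dvd_ne_zero (NeZero.ne δ) hd
  have hprod : ∏ p ∈ δ.primeFactors, p ^ d.factorization p = d := by
    rw [← Finsupp.prod_of_support_subset _
      (by simpa using Nat.primeFactors_mono hd (NeZero.ne δ)) _ fun p _ => pow_zero p,
      Nat.prod_factorization_pow_eq_self hd0]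
  have key :
      IsTorsionInvariant (∏ p ∈ δ.primeFactors, p ^ d.factorization p) (bvartheta δ d) := by
    unfold bvartheta
    refine IsTorsionInvariant.prod (fun p hp q hq hpq => ?_) fun p _ => ?_
    · exact Nat.Coprime.pow _ _ ((Nat.coprime_primes (Nat.prime_of_mem_primeFactors hp)
        (Nat.prime_of_mem_primeFactors hq)).mpr hpq)
    · refine (isTorsionInvariant_theta δ dvd_rfl).sub ?_
      split_ifs
      · exact isTorsionInvariant_theta δ (pow_dvd_pow p (Nat.le_succ _))
      · exact IsTorsionInvariant.zero
  rwa [hprod] at key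

theorem Nat.div_gcd_dvd_of_div_dvd {a d δ : ℕ} (hδ : δ ≠ 0) (hd : d ∣ δ) (ha : δ / d ∣ a) :
    δ / a.gcd δ ∣ d := by
  rw [Nat.div_dvd_iff_dvd_mul (Nat.gcd_dvd_right a δ)
    (Nat.gcd_pos_of_pos_right a (Nat.pos_of_ne_zero hδ))]
  calc δ = δ / d * d := (Nat.div_mul_cancel hd).symm
    _ ∣ a.gcd δ * d := Nat.mul_dvd_mul_right (Nat.dvd_gcd ha (Nat.div_dvd_of_dvd hd)) d

theorem bsigma_mul_theta_general (δ : ℕ) [NeZero δ] (a : ℕ) :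
    bsigma δ a * theta δ (δ / Nat.gcd a δ) = bsigma δ a := by
  rw [bsigma, sum_mul]
  refine sum_congr rfl fun d hd => ?_
  have hdδ := Nat.dvd_of_mem_divisors hd
  by_cases ha : δ / d ∣ a
  · rw [smul_mul_assoc, ((isTorsionInvariant_bvartheta hdδ).of_dvd
      (Nat.div_gcd_dvd_of_div_dvd (NeZero.ne δ) hdδ ha)).mul_theta
      (Nat.div_dvd_of_dvd (Nat.gcd_dvd_right a δ))]
  · simp [sigmaBar, ha]

/-- `𝛔_δ(a)·ϑ_{δ/gcd(a,δ)} = 𝛔_δ(a)`. -/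
theorem bsigma_mul_theta (δ : ℕ) [NeZero δ] (a : ℕ) (ha : 0 < a) :
    bsigma δ a * theta δ (δ / Nat.gcd a δ) = bsigma δ a :=
  bsigma_mul_theta_general δ a
end
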